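/- arXiv:2507.20069 — 2 statements merged into one kernel-verified Lean document; each statement's English description precedes it below -/
import Mathlib

section
/- Let v, w : ℝ → [0,∞) be measurable functions such that v is not almost everywhere equal to 0, w is locally integrable on ℝ, and ∫_ℝ∫_ℝ log⁺|x−y| · v(x) w(y) dx dy < ∞. Then w ∈ L¹_log(ℝ). -/
open MeasureTheory Real Filter Set
open scoped ENNReal

noncomputable section

/-- `log⁺ = max {log, 0}`. -/
def logPlus (x : ℝ) : ℝ := max (Real.log x) 0

/-- `v ∈ L¹_log(ℝ)`: `v` is integrable and `∫ log(1+|x|)|v(x)| dx < ∞`. -/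
def MemL1log (v : ℝ → ℝ) : Prop :=
  Integrable v (volume : Measure ℝ) ∧
    Integrable (fun x => Real.log (1 + |x|) * |v x|) (volume : Measure ℝ)

lemma logPlus_nonneg (x : ℝ) : 0 ≤ logPlus x := le_max_right _ _

lemma measurable_logPlus : Measurable logPlus :=
  Real.measurable_log.max measurable_const

lemma key_ineq (x₀ y : ℝ) (h : 2 * |x₀| + 8 ≤ |y|) :
    Real.log (1 + |y|) ≤ 4 * logPlus |x₀ - y| := by
  set t := |y| with ht
  have ht8 : (8:ℝ) ≤ t := le_trans (by linarith [abs_nonneg x₀]) h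
  have hd : t / 2 ≤ |x₀ - y| := by
    have h1 : |y| - |x₀| ≤ |y - x₀| := abs_sub_abs_le_abs_sub y x₀
    rw [abs_sub_comm] at h1
    linarith
  have h2 : Real.log (1 + t) ≤ 2 * Real.log t := by
    have hle : (1 + t) ≤ t ^ 2 := by nlinarith
    calc Real.log (1 + t) ≤ Real.log (t ^ 2) := Real.log_le_log (by linarith) hle
      _ = 2 * Real.log t := by rw [Real.log_pow]; push_cast; ring
  have h3 : Real.log t ≤ 2 * Real.log (t / 2) := by
    have hle : t ≤ (t / 2) ^ 2 := by nlinarith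
    calc Real.log t ≤ Real.log ((t / 2) ^ 2) := Real.log_le_log (by linarith) hle
      _ = 2 * Real.log (t / 2) := by rw [Real.log_pow]; push_cast; ring
  have h4 : Real.log (t / 2) ≤ logPlus |x₀ - y| :=
    le_trans (Real.log_le_log (by linarith) hd) (le_max_left _ _)
  linarith

theorem statement7 (v w : ℝ → ℝ) (hvmeas : Measurable v) (hwmeas : Measurable w)
    (hv0 : ∀ x, 0 ≤ v x) (hw0 : ∀ x, 0 ≤ w x)
    (hvne : ¬ (v =ᵐ[(volume : Measure ℝ)] 0))
    (hwloc : LocallyIntegrable w (volume : Measure ℝ))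
    (hfin : (∫⁻ x : ℝ, ∫⁻ y : ℝ,
        ENNReal.ofReal (logPlus |x - y| * (v x * w y))) < ⊤) :
    MemL1log w := by
  -- joint measurability
  have hF : Measurable fun p : ℝ × ℝ =>
      ENNReal.ofReal (logPlus |p.1 - p.2| * (v p.1 * w p.2)) := by
    apply Measurable.ennreal_ofReal
    exact ((measurable_logPlus.comp ((measurable_fst.sub measurable_snd).abs))).mul
      ((hvmeas.comp measurable_fst).mul (hwmeas.comp measurable_snd))
  have hinner : Measurable fun x : ℝ =>
      ∫⁻ y, ENNReal.ofReal (logPlus |x - y| * (v x * w y)) :=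
    hF.lintegral_prod_right'
  have hae : ∀ᵐ x : ℝ, (∫⁻ y, ENNReal.ofReal (logPlus |x - y| * (v x * w y))) < ⊤ :=
    ae_lt_top hinner hfin.ne
  -- the set where v is positive has positive measure
  have hvpos : (volume : Measure ℝ) {x | 0 < v x} ≠ 0 := by
    intro h0
    apply hvne
    rw [Filter.EventuallyEq, ae_iff]
    convert h0 using 2
    ext x
    simp only [Set.mem_setOf_eq, Pi.zero_apply]
    constructor
    · intro hx; exact lt_of_le_of_ne (hv0 x) (Ne.symm hx)
    · intro hx; exact ne_of_gt hx
  -- pick a point x₀ with v x₀ > 0 and finite inner integral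
  obtain ⟨x₀, hx₀pos, hx₀fin⟩ : ∃ x₀, 0 < v x₀ ∧
      (∫⁻ y, ENNReal.ofReal (logPlus |x₀ - y| * (v x₀ * w y))) < ⊤ := by
    by_contra hno
    push_neg at hno
    apply hvpos
    refine measure_mono_null ?_ (ae_iff.mp hae)
    intro x hx
    simp only [Set.mem_setOf_eq] at hx ⊢
    exact not_lt.mpr (hno x hx)
  -- remove the constant v x₀
  have hK : (∫⁻ y, ENNReal.ofReal (logPlus |x₀ - y| * w y)) < ⊤ := by
    have heq : (fun y => ENNReal.ofReal (logPlus |x₀ - y| * (v x₀ * w y)))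
        = fun y => ENNReal.ofReal (v x₀) * ENNReal.ofReal (logPlus |x₀ - y| * w y) := by
      funext y
      rw [← ENNReal.ofReal_mul hx₀pos.le]
      ring_nf
    rw [heq, lintegral_const_mul' _ _ ENNReal.ofReal_ne_top] at hx₀fin
    by_contra hcon
    rw [not_lt, top_le_iff] at hcon
    rw [hcon, ENNReal.mul_top (by simpa using hx₀pos)] at hx₀fin
    exact (lt_irrefl _ hx₀fin)
  set M : ℝ := 2 * |x₀| + 8 with hM
  have hM8 : (8:ℝ) ≤ M := by have := abs_nonneg x₀; linarith
  -- local integrability on [-M, M]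
  have hIW : (∫⁻ y in Icc (-M) M, ENNReal.ofReal (w y)) < ⊤ := by
    have h1 : IntegrableOn w (Icc (-M) M) volume :=
      hwloc.integrableOn_isCompact isCompact_Icc
    exact (hasFiniteIntegral_iff_ofReal (ae_of_all _ hw0)).mp h1.2
  -- G2 : the weighted integral is finite
  have hG2 : (∫⁻ y : ℝ, ENNReal.ofReal (Real.log (1 + |y|) * w y)) < ⊤ := by
    have hpt : ∀ y : ℝ, ENNReal.ofReal (Real.log (1 + |y|) * w y) ≤
        (Icc (-M) M).indicator (fun y => ENNReal.ofReal (Real.log (1 + M) * w y)) y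
        + ENNReal.ofReal (4 * (logPlus |x₀ - y| * w y)) := by
      intro y
      by_cases hy : |y| ≤ M
      · have hmem : y ∈ Icc (-M) M := by
          rcases abs_le.mp hy with ⟨h1, h2⟩; exact ⟨h1, h2⟩
        rw [Set.indicator_of_mem hmem]
        refine le_trans ?_ le_self_add
        apply ENNReal.ofReal_le_ofReal
        apply mul_le_mul_of_nonneg_right _ (hw0 y)
        exact Real.log_le_log (by positivity) (by linarith)
      · push_neg at hy
        refine le_trans ?_ le_add_self
        apply ENNReal.ofReal_le_ofReal
        have := key_ineq x₀ y (by linarith)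
        nlinarith [hw0 y]
    calc (∫⁻ y : ℝ, ENNReal.ofReal (Real.log (1 + |y|) * w y))
        ≤ ∫⁻ y : ℝ, ((Icc (-M) M).indicator
            (fun y => ENNReal.ofReal (Real.log (1 + M) * w y)) y
          + ENNReal.ofReal (4 * (logPlus |x₀ - y| * w y))) := lintegral_mono hpt
      _ = (∫⁻ y : ℝ, (Icc (-M) M).indicator
            (fun y => ENNReal.ofReal (Real.log (1 + M) * w y)) y)
          + ∫⁻ y : ℝ, ENNReal.ofReal (4 * (logPlus |x₀ - y| * w y)) := by
          apply lintegral_add_left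
          exact (Measurable.ennreal_ofReal ((measurable_const.mul hwmeas))).indicator
            measurableSet_Icc
      _ < ⊤ := by
          apply ENNReal.add_lt_top.mpr
          constructor
          · rw [lintegral_indicator measurableSet_Icc _]
            have heq : (fun y => ENNReal.ofReal (Real.log (1 + M) * w y))
                = fun y => ENNReal.ofReal (Real.log (1 + M)) * ENNReal.ofReal (w y) := by
              funext y
              rw [← ENNReal.ofReal_mul (Real.log_nonneg (by linarith))]
            rw [heq, lintegral_const_mul' _ _ ENNReal.ofReal_ne_top]
            exact ENNReal.mul_lt_top ENNReal.ofReal_lt_top hIW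
          · have heq : (fun y => ENNReal.ofReal (4 * (logPlus |x₀ - y| * w y)))
                = fun y => ENNReal.ofReal 4 * ENNReal.ofReal (logPlus |x₀ - y| * w y) := by
              funext y
              rw [← ENNReal.ofReal_mul (by norm_num)]
            rw [heq, lintegral_const_mul' _ _ ENNReal.ofReal_ne_top]
            exact ENNReal.mul_lt_top ENNReal.ofReal_lt_top hK
  -- G1 : w is integrable
  have hG1 : (∫⁻ y : ℝ, ENNReal.ofReal (w y)) < ⊤ := by
    have hpt : ∀ y : ℝ, ENNReal.ofReal (w y) ≤
        (Icc (-M) M).indicator (fun y => ENNReal.ofReal (w y)) y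
        + ENNReal.ofReal (Real.log (1 + |y|) * w y) := by
      intro y
      by_cases hy : |y| ≤ M
      · have hmem : y ∈ Icc (-M) M := by
          rcases abs_le.mp hy with ⟨h1, h2⟩; exact ⟨h1, h2⟩
        rw [Set.indicator_of_mem hmem]
        exact le_self_add
      · push_neg at hy
        refine le_trans ?_ le_add_self
        apply ENNReal.ofReal_le_ofReal
        have hlog : (1:ℝ) ≤ Real.log (1 + |y|) := by
          rw [Real.le_log_iff_exp_le (by positivity)]
          have := Real.exp_one_lt_d9
          linarith
        nlinarith [hw0 y]
    calc (∫⁻ y : ℝ, ENNReal.ofReal (w y))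
        ≤ ∫⁻ y : ℝ, ((Icc (-M) M).indicator (fun y => ENNReal.ofReal (w y)) y
          + ENNReal.ofReal (Real.log (1 + |y|) * w y)) := lintegral_mono hpt
      _ = (∫⁻ y : ℝ, (Icc (-M) M).indicator (fun y => ENNReal.ofReal (w y)) y)
          + ∫⁻ y : ℝ, ENNReal.ofReal (Real.log (1 + |y|) * w y) := by
          apply lintegral_add_left
          exact (hwmeas.ennreal_ofReal).indicator measurableSet_Icc
      _ < ⊤ := by
          apply ENNReal.add_lt_top.mpr
          refine ⟨?_, hG2⟩
          rw [lintegral_indicator measurableSet_Icc _]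
          exact hIW
  have hw_int : Integrable w (volume : Measure ℝ) := by
    refine ⟨hwmeas.aestronglyMeasurable, ?_⟩
    rw [hasFiniteIntegral_iff_ofReal (ae_of_all _ hw0)]
    exact hG1
  refine ⟨hw_int, ?_⟩
  have hmeas2 : Measurable fun x : ℝ => Real.log (1 + |x|) * |w x| :=
    (Real.measurable_log.comp (measurable_const.add measurable_id.abs)).mul hwmeas.abs
  refine ⟨hmeas2.aestronglyMeasurable, ?_⟩
  rw [hasFiniteIntegral_iff_ofReal (ae_of_all _ fun y =>
    mul_nonneg (Real.log_nonneg (by linarith [abs_nonneg y])) (abs_nonneg _))]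
  have habs : ∀ a : ℝ, |w a| = w a := fun a => abs_of_nonneg (hw0 a)
  simp only [habs]
  exact hG2
end
end

section
/- Let θ > 0 and let g : ℝ → ℝ be continuous with g(t) ≥ 0 for all t ≥ 0. Let u : ℝ → ℝ be continuous, bounded, with u > 0 on ℝ, and let w : ℝ → ℝ be continuous with w(x) → −∞ as |x| → ∞. Assume that for every x ∈ ℝ the principal value ((−Δ)^{1/2}u)(x) exists and ((−Δ)^{1/2}u)(x) + u(x) = θ·w(x)·g(u(x)). Then u(x) = O(1/x²) as |x| → ∞: there exist constants C, d > 0 such that u(x) ≤ C/x² for all |x| ≥ d. -/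
open MeasureTheory Real Filter Set
open scoped ENNReal Topology

noncomputable section

/-- `((−Δ)^{1/2}u)(x) = L` in the principal-value sense:
`(1/π)·∫_{|x−y|>ε} (u(x) − u(y))/(x − y)² dy → L` as `ε → 0⁺`. -/
def HasHalfLapAt (u : ℝ → ℝ) (x L : ℝ) : Prop :=
  Tendsto (fun ε : ℝ =>
      (1 / π) * ∫ y in {y : ℝ | ε < |x - y|}, (u x - u y) / (x - y) ^ 2)
    (nhdsWithin 0 (Set.Ioi 0)) (nhds L)

/-!
If `u - Φ` attains a positive maximum at `x₀`, the truncated integrals defining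
`(−Δ)^{1/2}(u − Φ)(x₀)` are nonnegative, so `(−Δ)^{1/2}u(x₀) ≥ (−Δ)^{1/2}Φ(x₀)`. Outside a
large interval `w ≤ 0`, so there `(−Δ)^{1/2}u + u ≤ 0`, while the barrier
`Φ = C/(1+x²) + δ log(1+x²)` satisfies `(−Δ)^{1/2}Φ + Φ ≥ 0` by the explicit formulas
`(−Δ)^{1/2}(1+x²)⁻¹ = (1−x²)/(1+x²)²` and `(−Δ)^{1/2} log(1+x²) = −2/(1+x²)`, obtained from
closed-form primitives of the kernels. The logarithm forces `u − Φ → −∞`, so a positive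
maximum would be attained, and `C` is chosen so that `u ≤ Φ` on the interval; hence `u ≤ Φ`
everywhere, and `δ → 0` gives `u ≤ C/(1+x²)`.
-/

def HalfLapIntegrable (u : ℝ → ℝ) (x : ℝ) : Prop :=
  ∀ ε > 0, IntegrableOn (fun y => (u x - u y) / (x - y) ^ 2) {y | ε < |x - y|}

section Truncation

variable {x ε : ℝ}

theorem setOf_lt_abs_sub_eq (x ε : ℝ) :
    {y : ℝ | ε < |x - y|} = Iio (x - ε) ∪ Ioi (x + ε) := by
  ext y
  simp only [mem_ofPred_eq, mem_union, mem_Iio, mem_Ioi, lt_abs]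
  constructor <;> rintro (h | h) <;> [left; right; left; right] <;> linarith

theorem measurableSet_setOf_lt_abs_sub (x ε : ℝ) : MeasurableSet {y : ℝ | ε < |x - y|} :=
  setOf_lt_abs_sub_eq x ε ▸ measurableSet_Iio.union measurableSet_Ioi

theorem integrableOn_div_sq_of_abs_le {v : ℝ → ℝ} {A : ℝ} (hv : Measurable v)
    (hA : ∀ y, |v y| ≤ A) (hε : 0 < ε) :
    IntegrableOn (fun y => v y / (x - y) ^ 2) {y | ε < |x - y|} := by
  have hdom : Integrable (fun y => A * (1 + (ε ^ 2)⁻¹) * (1 + (y - x) ^ 2)⁻¹) :=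
    (integrable_inv_one_add_sq.comp_sub_right x).const_mul _
  refine hdom.integrableOn.mono' (hv.div (by fun_prop)).aestronglyMeasurable ?_
  refine (ae_restrict_iff' (measurableSet_setOf_lt_abs_sub x ε)).2 (.of_forall fun y hy => ?_)
  have hA0 : 0 ≤ A := (abs_nonneg _).trans (hA y)
  have hεy : ε ^ 2 < (x - y) ^ 2 := sq_abs (x - y) ▸ pow_lt_pow_left₀ hy.out hε.le two_ne_zero
  rw [Real.norm_eq_abs, abs_div, abs_of_nonneg (sq_nonneg (x - y)),
    show (y - x) ^ 2 = (x - y) ^ 2 by ring]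
  calc |v y| / (x - y) ^ 2 ≤ A / (x - y) ^ 2 := by gcongr; exact hA y
    _ ≤ A * (1 + (ε ^ 2)⁻¹) * (1 + (x - y) ^ 2)⁻¹ := by
      rw [mul_assoc, div_eq_mul_inv]
      gcongr
      rw [inv_le_iff_one_le_mul₀ (by nlinarith)]
      field_simp
      nlinarith

theorem integrableOn_Iic_deriv_of_nonneg' {g g' : ℝ → ℝ} {b l : ℝ}
    (hderiv : ∀ y ∈ Iic b, HasDerivAt g (g' y) y) (hpos : ∀ y ∈ Iio b, 0 ≤ g' y)
    (hg : Tendsto g atBot (𝓝 l)) : IntegrableOn g' (Iic b) := by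
  have hneg : IntegrableOn (g' ∘ Neg.neg) (Neg.neg ⁻¹' Iio b) := by
    rw [show Neg.neg ⁻¹' Iio b = Ioi (-b) by ext; simp]
    refine integrableOn_Ioi_deriv_of_nonneg' (g := fun t => -g (-t)) (fun t ht => ?_)
      (fun t ht => hpos (-t) (mem_Iio.2 (by linarith [mem_Ioi.1 ht])))
      (hg.comp tendsto_neg_atTop_atBot).neg
    simpa using
      ((hderiv (-t) (mem_Iic.2 (by linarith [mem_Ici.1 ht]))).comp t (hasDerivAt_neg t)).fun_neg
  exact (integrableOn_Iic_iff_integrableOn_Iio).2 <|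
    ((Measure.measurePreserving_neg volume).integrableOn_comp_preimage
      (Homeomorph.neg ℝ).measurableEmbedding).1 hneg

theorem integrableOn_setOf_lt_abs_sub_of_hasDerivAt_of_nonneg {W f : ℝ → ℝ} {a b : ℝ}
    (hε : 0 < ε) (hW : ∀ y ≠ x, HasDerivAt W (f y) y) (hf : ∀ y ≠ x, 0 ≤ f y)
    (hbot : Tendsto W atBot (𝓝 a)) (htop : Tendsto W atTop (𝓝 b)) :
    IntegrableOn f {y | ε < |x - y|} := by
  rw [setOf_lt_abs_sub_eq]
  refine IntegrableOn.union ?_ ?_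
  · refine (integrableOn_Iic_deriv_of_nonneg' (fun y hy => hW y ?_) (fun y hy => hf y ?_)
      hbot).mono_set Iio_subset_Iic_self
    · exact (lt_of_le_of_lt hy.out (by linarith)).ne
    · exact (lt_trans hy.out (by linarith)).ne
  · refine integrableOn_Ioi_deriv_of_nonneg' (fun y hy => hW y ?_) (fun y hy => hf y ?_) htop
    · exact (lt_of_lt_of_le (by linarith) hy.out).ne'
    · exact (lt_trans (by linarith) hy.out).ne'

theorem integral_setOf_lt_abs_sub_of_hasDerivAt {F f : ℝ → ℝ} {a b : ℝ} (hε : 0 < ε)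
    (hF : ∀ y ≠ x, HasDerivAt F (f y) y) (hbot : Tendsto F atBot (𝓝 a))
    (htop : Tendsto F atTop (𝓝 b)) (hf : IntegrableOn f {y | ε < |x - y|}) :
    ∫ y in {y | ε < |x - y|}, f y = b - a + (F (x - ε) - F (x + ε)) := by
  rw [setOf_lt_abs_sub_eq] at hf ⊢
  have hdisj : Disjoint (Iio (x - ε)) (Ioi (x + ε)) :=
    Set.disjoint_left.2 fun y h1 h2 => by linarith [h1.out, h2.out]
  have hleft : IntegrableOn f (Iio (x - ε)) := hf.mono_set subset_union_left
  have hright : IntegrableOn f (Ioi (x + ε)) := hf.mono_set subset_union_right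
  rw [setIntegral_union hdisj measurableSet_Ioi hleft hright, ← integral_Iic_eq_integral_Iio,
    integral_Iic_of_hasDerivAt_of_tendsto' (fun y hy => hF y (by linarith [hy.out]))
      ((integrableOn_Iic_iff_integrableOn_Iio).2 hleft) hbot,
    integral_Ioi_of_hasDerivAt_of_tendsto' (fun y hy => hF y (by linarith [hy.out])) hright htop]
  ring

end Truncation

section Linearity

variable {u v : ℝ → ℝ} {x a b : ℝ}

theorem halfLapIntegrable_of_abs_le {M : ℝ} (hu : Measurable u) (hM : ∀ y, |u y| ≤ M) :
    HalfLapIntegrable u x := fun _ hε =>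
  integrableOn_div_sq_of_abs_le (measurable_const.sub hu)
    (fun y => (abs_sub _ _).trans (add_le_add (hM x) (hM y))) hε

theorem HalfLapIntegrable.add (hu : HalfLapIntegrable u x) (hv : HalfLapIntegrable v x) :
    HalfLapIntegrable (fun y => u y + v y) x := fun ε hε =>
  ((hu ε hε).add (hv ε hε)).congr_fun (fun y _ => by simp only [Pi.add_apply]; ring)
    (measurableSet_setOf_lt_abs_sub x ε)

theorem HalfLapIntegrable.const_mul (hu : HalfLapIntegrable u x) (c : ℝ) :
    HalfLapIntegrable (fun y => c * u y) x := fun ε hε =>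
  IntegrableOn.congr_fun ((hu ε hε).const_mul c) (fun y _ => by ring)
    (measurableSet_setOf_lt_abs_sub x ε)

theorem HasHalfLapAt.add (hu : HasHalfLapAt u x a) (hv : HasHalfLapAt v x b)
    (hiu : HalfLapIntegrable u x) (hiv : HalfLapIntegrable v x) :
    HasHalfLapAt (fun y => u y + v y) x (a + b) := by
  refine (Tendsto.add hu hv).congr' ?_
  filter_upwards [self_mem_nhdsWithin] with ε hε
  rw [← mul_add, ← integral_add (hiu ε hε) (hiv ε hε)]
  congr 2
  ext y
  ring

theorem HasHalfLapAt.const_mul (hu : HasHalfLapAt u x a) (c : ℝ) :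
    HasHalfLapAt (fun y => c * u y) x (c * a) := by
  refine (Tendsto.const_mul c hu).congr fun ε => ?_
  rw [mul_left_comm, ← integral_const_mul]
  congr 2
  ext y
  ring

theorem hasHalfLapAt_of_hasDerivAt {F : ℝ → ℝ} {ℓ : ℝ}
    (hF : ∀ y ≠ x, HasDerivAt F ((u x - u y) / (x - y) ^ 2) y)
    (hbot : Tendsto F atBot (𝓝 a)) (htop : Tendsto F atTop (𝓝 b))
    (hsymm : Tendsto (fun ε => F (x - ε) - F (x + ε)) (𝓝[>] 0) (𝓝 ℓ))
    (hu : HalfLapIntegrable u x) :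
    HasHalfLapAt u x (1 / π * (b - a + ℓ)) := by
  refine ((hsymm.const_add (b - a)).const_mul (1 / π)).congr' ?_
  filter_upwards [self_mem_nhdsWithin] with ε hε
  rw [integral_setOf_lt_abs_sub_of_hasDerivAt hε hF hbot htop (hu ε hε)]

theorem HasHalfLapAt.le_of_forall_sub_le {x₀ : ℝ} (hu : HasHalfLapAt u x₀ a)
    (hv : HasHalfLapAt v x₀ b) (hiu : HalfLapIntegrable u x₀) (hiv : HalfLapIntegrable v x₀)
    (hmax : ∀ y, u y - v y ≤ u x₀ - v x₀) : b ≤ a := by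
  refine le_of_tendsto_of_tendsto hv hu ?_
  filter_upwards [self_mem_nhdsWithin] with ε hε
  refine mul_le_mul_of_nonneg_left (setIntegral_mono_on (hiv ε hε) (hiu ε hε)
    (measurableSet_setOf_lt_abs_sub x₀ ε) fun y _ =>
      div_le_div_of_nonneg_right (by linarith [hmax y]) (sq_nonneg _)) (by positivity)

end Linearity

theorem le_of_subsolution_of_supersolution {u Φ Lu LΦ : ℝ → ℝ} {K : Set ℝ}
    (hu : Continuous u) (hΦ : Continuous Φ)
    (hlim : Tendsto (fun x => u x - Φ x) (cocompact ℝ) atBot) (hK : ∀ x ∈ K, u x ≤ Φ x)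
    (hsub : ∀ x ∉ K, HasHalfLapAt u x (Lu x) ∧ HalfLapIntegrable u x ∧ Lu x + u x ≤ 0)
    (hsuper : ∀ x ∉ K, HasHalfLapAt Φ x (LΦ x) ∧ HalfLapIntegrable Φ x ∧ 0 ≤ LΦ x + Φ x)
    (x : ℝ) : u x ≤ Φ x := by
  by_contra! hx
  obtain ⟨x₀, hmax⟩ := (show Continuous fun y => u y - Φ y from hu.sub hΦ).exists_forall_ge hlim
  have hpos : 0 < u x₀ - Φ x₀ := by linarith [hmax x]
  have hx₀ : x₀ ∉ K := fun h => by linarith [hK x₀ h]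
  obtain ⟨hLu, hiu, hsub⟩ := hsub x₀ hx₀
  obtain ⟨hLΦ, hiΦ, hsuper⟩ := hsuper x₀ hx₀
  linarith [hLu.le_of_forall_sub_le hLΦ hiu hiΦ hmax]

section Kernels

variable {x : ℝ}

theorem hasDerivAt_log_sq_sub_log_one_add_sq {y : ℝ} (hy : y ≠ x) :
    HasDerivAt (fun y => log ((y - x) ^ 2) - log (1 + y ^ 2)) (2 / (y - x) - 2 * y / (1 + y ^ 2))
      y := by
  have hyx : y - x ≠ 0 := sub_ne_zero.2 hy
  have h1 := (((hasDerivAt_id' y).sub_const x).fun_pow 2).log (pow_ne_zero 2 hyx)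
  have h2 := ((hasDerivAt_pow 2 y).const_add 1).log (by positivity)
  refine (h1.fun_sub h2).congr_deriv ?_
  field_simp
  ring

theorem tendsto_log_sq_sub_log_one_add_sq_atTop (x : ℝ) :
    Tendsto (fun y => log ((y - x) ^ 2) - log (1 + y ^ 2)) atTop (𝓝 0) := by
  -- with `t = y⁻¹`, `(y - x)² / (1 + y²) = (1 - x t)² / (t² + 1)`
  have hc : ContinuousAt (fun t : ℝ => log ((1 - x * t) ^ 2 / (t ^ 2 + 1))) 0 :=
    ContinuousAt.log (ContinuousAt.div (by fun_prop) (by fun_prop) (by positivity)) (by simp)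
  have h := hc.tendsto.comp tendsto_inv_atTop_zero
  simp only [mul_zero, sub_zero, one_pow, ne_eq, OfNat.ofNat_ne_zero, not_false_eq_true,
    zero_pow, zero_add, div_one, log_one] at h
  refine h.congr' ?_
  filter_upwards [eventually_gt_atTop 0, eventually_gt_atTop x] with y hy hyx
  rw [Function.comp_apply, ← log_div (pow_ne_zero 2 (sub_ne_zero.2 hyx.ne')) (by positivity)]
  congr 1
  field_simp

theorem tendsto_const_sub_atTop_atBot (x : ℝ) : Tendsto (fun y : ℝ => x - y) atTop atBot :=
  (tendsto_atBot_add_const_left atTop x tendsto_neg_atTop_atBot).congr fun y =>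
    (sub_eq_add_neg x y).symm

theorem tendsto_const_sub_atBot_atTop (x : ℝ) : Tendsto (fun y : ℝ => x - y) atBot atTop :=
  (tendsto_atTop_add_const_left atBot x tendsto_neg_atBot_atTop).congr fun y =>
    (sub_eq_add_neg x y).symm

theorem tendsto_sub_log_one_add_sq_div_atTop (c x : ℝ) :
    Tendsto (fun y => (c - log (1 + y ^ 2)) / (x - y)) atTop (𝓝 0) := by
  -- `log (1 + y²) = 2 log (y - x) + o(1)` and `log s / s → 0`
  have hlog : Tendsto (fun y : ℝ => log (y - x) / (y - x)) atTop (𝓝 0) :=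
    isLittleO_log_id_atTop.tendsto_div_nhds_zero.comp (tendsto_atTop_add_const_right atTop (-x)
      tendsto_id)
  have h := (((tendsto_log_sq_sub_log_one_add_sq_atTop x).const_add c).div_atBot
    (tendsto_const_sub_atTop_atBot x)).add (hlog.const_mul 2)
  rw [mul_zero, add_zero] at h
  refine h.congr' ?_
  filter_upwards [eventually_gt_atTop x] with y hyx
  have hyx' : y - x ≠ 0 := sub_ne_zero.2 hyx.ne'
  have hxy' : x - y ≠ 0 := sub_ne_zero.2 hyx.ne
  rw [log_pow]
  field_simp
  ring

def invOneAddSqKernelPrimitive (x y : ℝ) : ℝ :=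
  x / (1 + x ^ 2) ^ 2 * (log ((y - x) ^ 2) - log (1 + y ^ 2)) +
    (1 - x ^ 2) / (1 + x ^ 2) ^ 2 * arctan y

theorem hasDerivAt_invOneAddSqKernelPrimitive {y : ℝ} (hy : y ≠ x) :
    HasDerivAt (invOneAddSqKernelPrimitive x)
      (((1 + x ^ 2)⁻¹ - (1 + y ^ 2)⁻¹) / (x - y) ^ 2) y := by
  have hxy : x - y ≠ 0 := sub_ne_zero.2 hy.symm
  have hyx : y - x ≠ 0 := sub_ne_zero.2 hy
  refine (((hasDerivAt_log_sq_sub_log_one_add_sq hy).const_mul (x / (1 + x ^ 2) ^ 2)).fun_add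
    ((hasDerivAt_arctan y).const_mul ((1 - x ^ 2) / (1 + x ^ 2) ^ 2))).congr_deriv ?_
  field_simp
  ring

theorem invOneAddSqKernelPrimitive_neg (x y : ℝ) :
    invOneAddSqKernelPrimitive (-x) (-y) = -invOneAddSqKernelPrimitive x y := by
  simp only [invOneAddSqKernelPrimitive, neg_sq, arctan_neg,
    show (-y - -x) ^ 2 = (y - x) ^ 2 by ring]
  ring

theorem tendsto_invOneAddSqKernelPrimitive_atTop (x : ℝ) :
    Tendsto (invOneAddSqKernelPrimitive x) atTop (𝓝 ((1 - x ^ 2) / (1 + x ^ 2) ^ 2 * (π / 2))) := by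
  have h := ((tendsto_log_sq_sub_log_one_add_sq_atTop x).const_mul (x / (1 + x ^ 2) ^ 2)).add
    ((tendsto_arctan_atTop.mono_right nhdsWithin_le_nhds).const_mul ((1 - x ^ 2) / (1 + x ^ 2) ^ 2))
  rwa [mul_zero, zero_add] at h

theorem tendsto_invOneAddSqKernelPrimitive_atBot (x : ℝ) :
    Tendsto (invOneAddSqKernelPrimitive x) atBot
      (𝓝 (-((1 - x ^ 2) / (1 + x ^ 2) ^ 2 * (π / 2)))) := by
  have h := ((tendsto_invOneAddSqKernelPrimitive_atTop (-x)).comp tendsto_neg_atBot_atTop).neg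
  simp only [neg_sq] at h
  refine h.congr fun y => ?_
  rw [Function.comp_apply, ← neg_neg y, invOneAddSqKernelPrimitive_neg, neg_neg, neg_neg]

theorem tendsto_invOneAddSqKernelPrimitive_symm (x : ℝ) :
    Tendsto (fun ε => invOneAddSqKernelPrimitive x (x - ε) - invOneAddSqKernelPrimitive x (x + ε))
      (𝓝[>] 0) (𝓝 0) := by
  have hc : Continuous fun ε => x / (1 + x ^ 2) ^ 2 *
      (log (1 + (x + ε) ^ 2) - log (1 + (x - ε) ^ 2)) +
      (1 - x ^ 2) / (1 + x ^ 2) ^ 2 * (arctan (x - ε) - arctan (x + ε)) := by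
    fun_prop (disch := intro; positivity)
  refine ((hc.tendsto' 0 0 (by simp)).mono_left nhdsWithin_le_nhds).congr fun ε => ?_
  simp only [invOneAddSqKernelPrimitive, show (x - ε - x) ^ 2 = ε ^ 2 by ring,
    show (x + ε - x) ^ 2 = ε ^ 2 by ring]
  ring

theorem halfLapIntegrable_inv_one_add_sq (x : ℝ) :
    HalfLapIntegrable (fun y => (1 + y ^ 2)⁻¹) x :=
  halfLapIntegrable_of_abs_le (M := 1) (by fun_prop) fun y => by
    rw [abs_of_pos (by positivity)]
    exact inv_le_one_of_one_le₀ (by nlinarith)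

theorem hasHalfLapAt_inv_one_add_sq (x : ℝ) :
    HasHalfLapAt (fun y => (1 + y ^ 2)⁻¹) x ((1 - x ^ 2) / (1 + x ^ 2) ^ 2) := by
  convert hasHalfLapAt_of_hasDerivAt (u := fun y => (1 + y ^ 2)⁻¹)
    (fun y hy => hasDerivAt_invOneAddSqKernelPrimitive hy)
    (tendsto_invOneAddSqKernelPrimitive_atBot x) (tendsto_invOneAddSqKernelPrimitive_atTop x)
    (tendsto_invOneAddSqKernelPrimitive_symm x) (halfLapIntegrable_inv_one_add_sq x) using 1
  field_simp
  ring

def logOneAddSqKernelPrimitive (x y : ℝ) : ℝ :=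
  (log (1 + x ^ 2) - log (1 + y ^ 2)) / (x - y) -
    x / (1 + x ^ 2) * (log ((y - x) ^ 2) - log (1 + y ^ 2)) - 2 / (1 + x ^ 2) * arctan y

theorem hasDerivAt_logOneAddSqKernelPrimitive {y : ℝ} (hy : y ≠ x) :
    HasDerivAt (logOneAddSqKernelPrimitive x)
      ((log (1 + x ^ 2) - log (1 + y ^ 2)) / (x - y) ^ 2) y := by
  have hxy : x - y ≠ 0 := sub_ne_zero.2 hy.symm
  have hyx : y - x ≠ 0 := sub_ne_zero.2 hy
  have hlog := (((hasDerivAt_pow 2 y).const_add 1).log (by positivity)).const_sub (log (1 + x ^ 2))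
  refine (((hlog.fun_div ((hasDerivAt_id' y).const_sub x) hxy).fun_sub
    ((hasDerivAt_log_sq_sub_log_one_add_sq hy).const_mul (x / (1 + x ^ 2)))).fun_sub
    ((hasDerivAt_arctan y).const_mul (2 / (1 + x ^ 2)))).congr_deriv ?_
  field_simp
  ring

theorem logOneAddSqKernelPrimitive_neg (x y : ℝ) :
    logOneAddSqKernelPrimitive (-x) (-y) = -logOneAddSqKernelPrimitive x y := by
  simp only [logOneAddSqKernelPrimitive, neg_sq, arctan_neg,
    show (-y - -x) ^ 2 = (y - x) ^ 2 by ring, show -x - -y = -(x - y) by ring, div_neg]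
  ring

theorem tendsto_logOneAddSqKernelPrimitive_atTop (x : ℝ) :
    Tendsto (logOneAddSqKernelPrimitive x) atTop (𝓝 (-(2 / (1 + x ^ 2) * (π / 2)))) := by
  have h := ((tendsto_sub_log_one_add_sq_div_atTop (log (1 + x ^ 2)) x).sub
    ((tendsto_log_sq_sub_log_one_add_sq_atTop x).const_mul (x / (1 + x ^ 2)))).sub
    ((tendsto_arctan_atTop.mono_right nhdsWithin_le_nhds).const_mul (2 / (1 + x ^ 2)))
  rwa [mul_zero, sub_zero, zero_sub] at h

theorem tendsto_logOneAddSqKernelPrimitive_atBot (x : ℝ) :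
    Tendsto (logOneAddSqKernelPrimitive x) atBot (𝓝 (2 / (1 + x ^ 2) * (π / 2))) := by
  have h := ((tendsto_logOneAddSqKernelPrimitive_atTop (-x)).comp tendsto_neg_atBot_atTop).neg
  simp only [neg_sq, neg_neg] at h
  refine h.congr fun y => ?_
  rw [Function.comp_apply, ← neg_neg y, logOneAddSqKernelPrimitive_neg, neg_neg, neg_neg]

theorem tendsto_logOneAddSqKernelPrimitive_symm (x : ℝ) :
    Tendsto (fun ε => logOneAddSqKernelPrimitive x (x - ε) - logOneAddSqKernelPrimitive x (x + ε))
      (𝓝[>] 0) (𝓝 0) := by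
  have hψ := ((hasDerivAt_pow 2 x).const_add 1).log (by positivity)
  have hneg : Tendsto (fun ε : ℝ => -ε) (𝓝[>] 0) (𝓝[<] 0) := by
    simpa using tendsto_neg_nhdsGT_neg (a := (0 : ℝ))
  have hc : Continuous fun ε => x / (1 + x ^ 2) *
      (log (1 + (x - ε) ^ 2) - log (1 + (x + ε) ^ 2)) -
      2 / (1 + x ^ 2) * (arctan (x - ε) - arctan (x + ε)) := by
    fun_prop (disch := intro; positivity)
  -- the `/(x - y)` term contributes the left minus the right difference quotient of `log (1 + y²)`
  have h := ((hψ.tendsto_slope_zero_left.comp hneg).sub hψ.tendsto_slope_zero_right).add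
    ((hc.tendsto' 0 0 (by simp)).mono_left nhdsWithin_le_nhds)
  rw [sub_self, zero_add] at h
  refine h.congr' ?_
  filter_upwards [self_mem_nhdsWithin] with ε (hε : 0 < ε)
  simp only [Function.comp_apply, smul_eq_mul, logOneAddSqKernelPrimitive,
    show (x - ε - x) ^ 2 = ε ^ 2 by ring, show (x + ε - x) ^ 2 = ε ^ 2 by ring,
    show x - (x - ε) = ε by ring, show x - (x + ε) = -ε by ring, ← sub_eq_add_neg]
  field_simp
  ring

theorem halfLapIntegrable_log_one_add_sq (x : ℝ) :
    HalfLapIntegrable (fun y => log (1 + y ^ 2)) x := by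
  intro ε hε
  -- the kernel is `L / (x - y)²` minus a nonnegative function whose primitive converges at `±∞`
  set L := log (1 + x ^ 2)
  have hW : ∀ y ≠ x, HasDerivAt (fun y => L / (x - y) - logOneAddSqKernelPrimitive x y)
      (log (1 + y ^ 2) / (x - y) ^ 2) y := fun y hy => by
    have hxy : x - y ≠ 0 := sub_ne_zero.2 hy.symm
    refine (((hasDerivAt_const y L).fun_div ((hasDerivAt_id' y).const_sub x) hxy).fun_sub
      (hasDerivAt_logOneAddSqKernelPrimitive hy)).congr_deriv ?_
    field_simp
    ring
  have hpos := integrableOn_setOf_lt_abs_sub_of_hasDerivAt_of_nonneg hε hW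
    (fun y _ => div_nonneg (log_nonneg (by nlinarith)) (sq_nonneg _))
    (((tendsto_const_sub_atBot_atTop x).const_div_atTop L).sub
      (tendsto_logOneAddSqKernelPrimitive_atBot x))
    (((tendsto_const_sub_atTop_atBot x).const_div_atBot L).sub
      (tendsto_logOneAddSqKernelPrimitive_atTop x))
  have hconst := integrableOn_div_sq_of_abs_le (v := fun _ => L) (x := x) measurable_const
    (fun _ => le_rfl) hε
  exact (hconst.sub hpos).congr_fun (fun y _ => by simp only [Pi.sub_apply]; ring)
    (measurableSet_setOf_lt_abs_sub x ε)

theorem hasHalfLapAt_log_one_add_sq (x : ℝ) :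
    HasHalfLapAt (fun y => log (1 + y ^ 2)) x (-2 / (1 + x ^ 2)) := by
  convert hasHalfLapAt_of_hasDerivAt (u := fun y => log (1 + y ^ 2))
    (fun y hy => hasDerivAt_logOneAddSqKernelPrimitive hy)
    (tendsto_logOneAddSqKernelPrimitive_atBot x) (tendsto_logOneAddSqKernelPrimitive_atTop x)
    (tendsto_logOneAddSqKernelPrimitive_symm x) (halfLapIntegrable_log_one_add_sq x) using 1
  field_simp
  ring

end Kernels

theorem exists_forall_lt_abs_of_eventually_cocompact {p : ℝ → Prop}
    (h : ∀ᶠ x in cocompact ℝ, p x) (r : ℝ) : ∃ R, r ≤ R ∧ ∀ x, R < |x| → p x := by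
  rw [← Metric.cobounded_eq_cocompact, ← comap_norm_atTop, eventually_comap,
    eventually_atTop] at h
  obtain ⟨a, ha⟩ := h
  exact ⟨max r a, le_max_left r a, fun x hx => ha ‖x‖ (by
    rw [Real.norm_eq_abs]; exact (le_max_right r a).trans hx.le) x rfl⟩

theorem tendsto_log_one_add_sq_cocompact :
    Tendsto (fun y : ℝ => log (1 + y ^ 2)) (cocompact ℝ) atTop := by
  refine tendsto_log_atTop.comp (tendsto_atTop_add_const_left _ 1 ?_)
  refine ((tendsto_pow_atTop two_ne_zero).comp (tendsto_norm_cocompact_atTop (E := ℝ))).congr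
    fun y => ?_
  rw [Function.comp_apply, Real.norm_eq_abs, sq_abs]

theorem halfLapIntegrable_barrier (C δ x : ℝ) :
    HalfLapIntegrable (fun y => C * (1 + y ^ 2)⁻¹ + δ * log (1 + y ^ 2)) x :=
  ((halfLapIntegrable_inv_one_add_sq x).const_mul C).add
    ((halfLapIntegrable_log_one_add_sq x).const_mul δ)

theorem le_div_one_add_sq_of_subsolution {u L : ℝ → ℝ} {M R : ℝ} (hu : Continuous u)
    (hM : ∀ x, |u x| ≤ M) (hR : 2 ≤ R)
    (hsub : ∀ x, R < |x| → HasHalfLapAt u x (L x) ∧ L x + u x ≤ 0) (x : ℝ) :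
    u x ≤ M * (1 + R ^ 2) / (1 + x ^ 2) := by
  set C := M * (1 + R ^ 2)
  have hM0 : 0 ≤ M := (abs_nonneg _).trans (hM 0)
  have hbarrier : ∀ δ > 0, u x ≤ C * (1 + x ^ 2)⁻¹ + δ * log (1 + x ^ 2) := fun δ hδ => by
    refine le_of_subsolution_of_supersolution (K := {x | |x| ≤ R}) (Lu := L)
      (Φ := fun y => C * (1 + y ^ 2)⁻¹ + δ * log (1 + y ^ 2))
      (LΦ := fun x => C * ((1 - x ^ 2) / (1 + x ^ 2) ^ 2) + δ * (-2 / (1 + x ^ 2))) hu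
      (by fun_prop (disch := intro; positivity)) ?_ ?_ ?_ ?_ x
    · refine tendsto_atBot_mono (fun y => ?_) (tendsto_atBot_add_const_left _ M
        (tendsto_neg_atTop_atBot.comp (tendsto_log_one_add_sq_cocompact.const_mul_atTop hδ)))
      have : 0 ≤ C * (1 + y ^ 2)⁻¹ := by positivity
      simp only [Function.comp_apply]
      linarith [(le_abs_self (u y)).trans (hM y)]
    · intro y (hy : |y| ≤ R)
      have hy2 : y ^ 2 ≤ R ^ 2 := sq_le_sq' (neg_le_of_abs_le hy) (le_of_abs_le hy)
      have hMC : M ≤ C * (1 + y ^ 2)⁻¹ := by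
        rw [← div_eq_mul_inv, le_div_iff₀ (by positivity)]
        exact mul_le_mul_of_nonneg_left (by linarith) hM0
      have : 0 ≤ δ * log (1 + y ^ 2) := mul_nonneg hδ.le (log_nonneg (by nlinarith))
      linarith [(le_abs_self (u y)).trans (hM y)]
    · intro y (hy : ¬|y| ≤ R)
      obtain ⟨hLu, hLu_le⟩ := hsub y (not_le.1 hy)
      exact ⟨hLu, halfLapIntegrable_of_abs_le hu.measurable hM, hLu_le⟩
    · intro y (hy : ¬|y| ≤ R)
      refine ⟨((hasHalfLapAt_inv_one_add_sq y).const_mul C).add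
        ((hasHalfLapAt_log_one_add_sq y).const_mul δ)
        ((halfLapIntegrable_inv_one_add_sq y).const_mul C)
        ((halfLapIntegrable_log_one_add_sq y).const_mul δ), halfLapIntegrable_barrier C δ y, ?_⟩
      -- `LΦ + Φ = 2C/(1+y²)² + δ (log (1+y²) - 2/(1+y²))`, and `log t ≥ 1 - 1/t ≥ 2/t` for `t ≥ 3`
      have hy3 : 3 ≤ 1 + y ^ 2 := by nlinarith [sq_abs y, abs_nonneg y]
      have hinv : (1 + y ^ 2)⁻¹ ≤ 3⁻¹ := inv_anti₀ (by norm_num) hy3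
      have hlog := one_sub_inv_le_log_of_pos (by positivity : (0 : ℝ) < 1 + y ^ 2)
      have hC : C * ((1 - y ^ 2) / (1 + y ^ 2) ^ 2) + C * (1 + y ^ 2)⁻¹ =
          2 * C / (1 + y ^ 2) ^ 2 := by
        field_simp
        ring
      have : 0 ≤ 2 * C / (1 + y ^ 2) ^ 2 := by positivity
      have : 0 ≤ δ * (log (1 + y ^ 2) - 2 * (1 + y ^ 2)⁻¹) :=
        mul_nonneg hδ.le (by linarith)
      have : δ * (-2 / (1 + y ^ 2)) = -(δ * (2 * (1 + y ^ 2)⁻¹)) := by ring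
      nlinarith
  have hlim : Tendsto (fun δ => C * (1 + x ^ 2)⁻¹ + δ * log (1 + x ^ 2)) (𝓝[>] 0)
      (𝓝 (C * (1 + x ^ 2)⁻¹)) := by
    simpa using ((tendsto_id.mul_const (log (1 + x ^ 2))).const_add (C * (1 + x ^ 2)⁻¹)).mono_left
      (nhdsWithin_le_nhds (a := (0 : ℝ)))
  rw [div_eq_mul_inv]
  exact ge_of_tendsto hlim (eventually_mem_nhdsWithin.mono hbarrier)

theorem statement16_general (θ : ℝ) (hθ : 0 < θ)
    (g : ℝ → ℝ) (hgnn : ∀ t : ℝ, 0 ≤ t → 0 ≤ g t)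
    (u : ℝ → ℝ) (hu : Continuous u) (hubd : ∃ M : ℝ, ∀ x, |u x| ≤ M)
    (hupos : ∀ x, 0 < u x)
    (w : ℝ → ℝ)
    (hwlim : Tendsto w (cocompact ℝ) atBot)
    (heq : ∀ x : ℝ, HasHalfLapAt u x (θ * w x * g (u x) - u x)) :
    ∃ C d : ℝ, 0 < C ∧ 0 < d ∧ ∀ x : ℝ, d ≤ |x| → u x ≤ C / x ^ 2 := by
  obtain ⟨M, hM⟩ := hubd
  have hM0 : 0 < M := (hupos 0).trans_le ((le_abs_self _).trans (hM 0))
  obtain ⟨R, hR, hwR⟩ :=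
    exists_forall_lt_abs_of_eventually_cocompact (hwlim.eventually (eventually_le_atBot 0)) 2
  have hsub : ∀ x, R < |x| →
      HasHalfLapAt u x (θ * w x * g (u x) - u x) ∧ θ * w x * g (u x) - u x + u x ≤ 0 :=
    fun x hx => ⟨heq x, by
      nlinarith [mul_nonpos_of_nonneg_of_nonpos hθ.le (hwR x hx), hgnn _ (hupos x).le]⟩
  refine ⟨M * (1 + R ^ 2), R, by positivity, by linarith, fun x hx =>
    (le_div_one_add_sq_of_subsolution hu hM hR hsub x).trans ?_⟩
  have : 0 < x ^ 2 := by nlinarith [sq_abs x, abs_nonneg x]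
  gcongr
  linarith

theorem statement16 (θ : ℝ) (hθ : 0 < θ)
    (g : ℝ → ℝ) (hg : Continuous g) (hgnn : ∀ t : ℝ, 0 ≤ t → 0 ≤ g t)
    (u : ℝ → ℝ) (hu : Continuous u) (hubd : ∃ M : ℝ, ∀ x, |u x| ≤ M)
    (hupos : ∀ x, 0 < u x)
    (w : ℝ → ℝ) (hw : Continuous w)
    (hwlim : Tendsto w (cocompact ℝ) atBot)
    (heq : ∀ x : ℝ, HasHalfLapAt u x (θ * w x * g (u x) - u x)) :
    ∃ C d : ℝ, 0 < C ∧ 0 < d ∧ ∀ x : ℝ, d ≤ |x| → u x ≤ C / x ^ 2 :=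
  statement16_general θ hθ g hgnn u hu hubd hupos w hwlim heq
end
end
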